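/- For every integer k ≥ 1 and every j ∈ {1,…,k}, the map φ_j : ℝ^k → ℝ^k defined by φ_j(x_1,…,x_k) = (x_{j+1} − x_j, …, x_k − x_j, −x_j, x_1 − x_j, …, x_{j−1} − x_j) restricts to a bijection of A_k onto itself; equivalently, the uniform probability distribution ν_1^k on A_k is invariant under φ_j. -/
import Mathlib


open MeasureTheory ProbabilityTheory

noncomputable section

/-- The set `A_k` viewed inside `ℝ^k` : integer-valued vectors with `x_1 ≥ -1`,
`x_{i+1} - x_i ≥ -1` for `1 ≤ i < k` and `-x_k ≥ -1`. -/
def AsetR (k : ℕ) : Set (Fin k → ℝ) :=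
  {x | (∀ i, ∃ m : ℤ, x i = (m : ℝ)) ∧
    (∀ h : 0 < k, (-1 : ℝ) ≤ x ⟨0, h⟩ ∧ x ⟨k - 1, by omega⟩ ≤ 1) ∧
    ∀ i j : Fin k, (j : ℕ) = (i : ℕ) + 1 → (-1 : ℝ) ≤ x j - x i}

/-- The map `φ_j(x_1,…,x_k) = (x_{j+1}-x_j, …, x_k-x_j, -x_j, x_1-x_j, …, x_{j-1}-x_j)`
(written with `1`-based indices `j ∈ {1,…,k}`). -/
def phi (k j : ℕ) (hj1 : 1 ≤ j) (hjk : j ≤ k) (x : Fin k → ℝ) : Fin k → ℝ := fun i =>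
  (if h : (i : ℕ) + j < k then x ⟨(i : ℕ) + j, h⟩
    else if (i : ℕ) + j = k then 0
    else x ⟨(i : ℕ) + j - k - 1, by have := i.isLt; omega⟩) -
  x ⟨j - 1, by omega⟩

lemma phi_comp (k j j' : ℕ) (hj1 : 1 ≤ j) (hjk : j ≤ k) (hj1' : 1 ≤ j') (hjk' : j' ≤ k)
    (hsum : j + j' = k + 1) (x : Fin k → ℝ) :
    phi k j' hj1' hjk' (phi k j hj1 hjk x) = x := by
  funext i
  have hik := i.isLt
  simp only [phi]
  have hc1 : ¬ (j' - 1 + j < k) := by omega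
  have hc2 : j' - 1 + j = k := by omega
  rw [dif_neg hc1, if_pos hc2]
  by_cases h1 : (i : ℕ) + j' < k
  · rw [dif_pos h1]
    have h2 : ¬ ((i : ℕ) + j' + j < k) := by omega
    have h3 : ¬ ((i : ℕ) + j' + j = k) := by omega
    rw [dif_neg h2, if_neg h3]
    have hidx : ∀ h, (⟨(i : ℕ) + j' + j - k - 1, h⟩ : Fin k) = i :=
      fun h => Fin.ext (by simp; omega)
    rw [hidx]
    ring
  · rw [dif_neg h1]
    by_cases h2 : (i : ℕ) + j' = k
    · rw [if_pos h2]
      have hidx : ∀ h, (⟨j - 1, h⟩ : Fin k) = i := fun h => Fin.ext (by simp; omega)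
      rw [hidx]
      ring
    · rw [if_neg h2]
      have h3 : (i : ℕ) + j' - k - 1 + j < k := by omega
      rw [dif_pos h3]
      have hidx : ∀ h, (⟨(i : ℕ) + j' - k - 1 + j, h⟩ : Fin k) = i :=
        fun h => Fin.ext (by simp; omega)
      rw [hidx]
      ring

lemma phi_mapsTo (k j : ℕ) (hk : 1 ≤ k) (hj1 : 1 ≤ j) (hjk : j ≤ k) :
    Set.MapsTo (phi k j hj1 hjk) (AsetR k) (AsetR k) := by
  intro x hx
  obtain ⟨hint, hbd, hstep⟩ := hx
  have hbd1 : (-1 : ℝ) ≤ x ⟨0, hk⟩ := (hbd hk).1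
  have hbd2 : x ⟨k - 1, by omega⟩ ≤ 1 := (hbd hk).2
  refine ⟨?_, ?_, ?_⟩
  · -- integrality
    intro i
    simp only [phi, Set.mem_setOf_eq]
    obtain ⟨b, hb⟩ := hint ⟨j - 1, by omega⟩
    split_ifs with h1 h2
    · obtain ⟨a, ha⟩ := hint ⟨(i : ℕ) + j, h1⟩
      exact ⟨a - b, by rw [ha, hb]; push_cast; ring⟩
    · exact ⟨-b, by rw [hb]; push_cast; ring⟩
    · obtain ⟨a, ha⟩ := hint ⟨(i : ℕ) + j - k - 1, by have := i.isLt; omega⟩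
      exact ⟨a - b, by rw [ha, hb]; push_cast; ring⟩
  · -- boundary conditions
    intro h0
    constructor
    · -- first coordinate ≥ -1
      simp only [phi]
      by_cases h1 : ((⟨0, h0⟩ : Fin k) : ℕ) + j < k
      · rw [dif_pos h1]
        have := hstep ⟨j - 1, by omega⟩ ⟨(⟨0, h0⟩ : Fin k) + j, h1⟩ (by simp; omega)
        linarith
      · have h1' : ¬ (0 + j < k) := by simpa using h1
        rw [dif_neg h1, if_pos (by simp; omega)]
        have hidx : ∀ h, (⟨j - 1, h⟩ : Fin k) = ⟨k - 1, by omega⟩ :=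
          fun h => Fin.ext (by simp; omega)
        rw [hidx]
        linarith
    · -- last coordinate ≤ 1
      simp only [phi]
      by_cases h1 : ((⟨k - 1, by omega⟩ : Fin k) : ℕ) + j < k
      · exact absurd h1 (by simp; omega)
      · rw [dif_neg h1]
        by_cases h2 : ((⟨k - 1, by omega⟩ : Fin k) : ℕ) + j = k
        · rw [if_pos h2]
          have hidx : ∀ h, (⟨j - 1, h⟩ : Fin k) = ⟨0, h0⟩ :=
            fun h => Fin.ext (by simp at h2 ⊢; omega)
          rw [hidx]
          linarith
        · rw [if_neg h2]
          have hj2 : 2 ≤ j := by simp at h1 h2; omega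
          have := hstep ⟨((⟨k - 1, by omega⟩ : Fin k) : ℕ) + j - k - 1,
              by simp; omega⟩ ⟨j - 1, by omega⟩ (by simp; omega)
          linarith
  · -- step conditions
    intro a b hab
    have hak := a.isLt
    have hbk := b.isLt
    simp only [phi]
    by_cases h1 : (b : ℕ) + j < k
    · rw [dif_pos h1, dif_pos (show (a : ℕ) + j < k by omega)]
      have := hstep ⟨(a : ℕ) + j, by omega⟩ ⟨(b : ℕ) + j, h1⟩ (by simp; omega)
      linarith
    · rw [dif_neg h1]
      by_cases h2 : (b : ℕ) + j = k
      · rw [if_pos h2, dif_pos (show (a : ℕ) + j < k by omega)]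
        have hidx : ∀ h, (⟨(a : ℕ) + j, h⟩ : Fin k) = ⟨k - 1, by omega⟩ :=
          fun h => Fin.ext (by simp; omega)
        rw [hidx]
        linarith
      · rw [if_neg h2]
        by_cases h3 : (a : ℕ) + j < k
        · exact absurd h3 (by omega)
        · rw [dif_neg h3]
          by_cases h4 : (a : ℕ) + j = k
          · rw [if_pos h4]
            have hidx : ∀ h, (⟨(b : ℕ) + j - k - 1, h⟩ : Fin k) = ⟨0, by omega⟩ :=
              fun h => Fin.ext (by simp; omega)
            rw [hidx]
            have hx0 : (-1 : ℝ) ≤ x ⟨0, by omega⟩ := by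
              have h0 : 0 < k := by omega
              have := (hbd h0).1
              convert this using 3
            linarith
          · rw [if_neg h4]
            have := hstep ⟨(a : ℕ) + j - k - 1, by omega⟩
                ⟨(b : ℕ) + j - k - 1, by omega⟩ (by simp; omega)
            linarith

lemma phi_measurable (k j : ℕ) (hj1 : 1 ≤ j) (hjk : j ≤ k) :
    Measurable (phi k j hj1 hjk) := by
  rw [measurable_pi_iff]
  intro i
  unfold phi
  apply Measurable.sub _ (measurable_pi_apply _)
  split_ifs
  · exact measurable_pi_apply _
  · exact measurable_const
  · exact measurable_pi_apply _

lemma AsetR_countable (k : ℕ) : (AsetR k).Countable := by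
  have : AsetR k ⊆ Set.range (fun m : Fin k → ℤ => fun i => (m i : ℝ)) := by
    intro x hx
    choose m hm using hx.1
    exact ⟨m, by funext i; exact (hm i).symm⟩
  exact (Set.countable_range _).mono this

theorem phi_bijOn_and_uniform_invariant (k j : ℕ) (hk : 1 ≤ k) (hj1 : 1 ≤ j) (hjk : j ≤ k) :
    Set.BijOn (phi k j hj1 hjk) (AsetR k) (AsetR k) ∧
    Measure.map (phi k j hj1 hjk) (uniformOn (AsetR k)) = uniformOn (AsetR k) := by
  set j' : ℕ := k + 1 - j with hj'
  have hj1' : 1 ≤ j' := by omega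
  have hjk' : j' ≤ k := by omega
  have hsum : j + j' = k + 1 := by omega
  have hsum' : j' + j = k + 1 := by omega
  have hinv1 : ∀ x, phi k j' hj1' hjk' (phi k j hj1 hjk x) = x :=
    phi_comp k j j' hj1 hjk hj1' hjk' hsum
  have hinv2 : ∀ x, phi k j hj1 hjk (phi k j' hj1' hjk' x) = x :=
    phi_comp k j' j hj1' hjk' hj1 hjk hsum'
  have hinj : Function.Injective (phi k j hj1 hjk) :=
    Function.LeftInverse.injective hinv1
  have hsurj : Function.Surjective (phi k j hj1 hjk) :=
    Function.RightInverse.surjective hinv2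
  have hmt : Set.MapsTo (phi k j hj1 hjk) (AsetR k) (AsetR k) :=
    phi_mapsTo k j hk hj1 hjk
  have hmt' : Set.MapsTo (phi k j' hj1' hjk') (AsetR k) (AsetR k) :=
    phi_mapsTo k j' hk hj1' hjk'
  have hbij : Set.BijOn (phi k j hj1 hjk) (AsetR k) (AsetR k) := by
    refine ⟨hmt, hinj.injOn, ?_⟩
    intro y hy
    exact ⟨phi k j' hj1' hjk' y, hmt' hy, hinv2 y⟩
  refine ⟨hbij, ?_⟩
  have hs_meas : MeasurableSet (AsetR k) := (AsetR_countable k).measurableSet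
  have hmeas := phi_measurable k j hj1 hjk
  have himg : phi k j hj1 hjk '' AsetR k = AsetR k := hbij.image_eq
  have hpre : phi k j hj1 hjk ⁻¹' AsetR k = AsetR k := by
    conv_lhs => rw [← himg, Set.preimage_image_eq _ hinj]
  ext B hB
  rw [Measure.map_apply hmeas hB]
  simp only [uniformOn]
  rw [cond_apply hs_meas, cond_apply hs_meas]
  congr 1
  have key : AsetR k ∩ phi k j hj1 hjk ⁻¹' B = phi k j hj1 hjk ⁻¹' (AsetR k ∩ B) := by
    rw [Set.preimage_inter, hpre]
  rw [key]
  calc Measure.count (phi k j hj1 hjk ⁻¹' (AsetR k ∩ B))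
      = Measure.count (phi k j hj1 hjk '' (phi k j hj1 hjk ⁻¹' (AsetR k ∩ B))) :=
        (Measure.count_injective_image hinj _).symm
    _ = Measure.count (AsetR k ∩ B) := by rw [Set.image_preimage_eq _ hsurj]
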